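/- arXiv:1902.02951 — 2 statements merged into one kernel-verified Lean document; each statement's English description precedes it below -/
import Mathlib

section
/- The set of admissible positions is nonempty (for any t ∈ [t0,ϑ] and any w0 with ‖w0‖ ≤ R0, the constant function w ≡ w0 on [t0,t] gives an admissible position), and there exist constants R1, M1, H1 > 0, depending only on α, t0, ϑ, R0 and c, such that for every admissible position (t, w(·)) with Caputo derivative φ: (i) ‖w(τ)‖ ≤ R1 for all τ ∈ [t0,t]; (ii) ‖φ(τ)‖ ≤ M1 for a.e. τ ∈ [t0,t]; (iii) ‖w(τ) − w(τ′)‖ ≤ H1·|τ − τ′|^α for all τ, τ′ ∈ [t0,t]. In fact, one may take R1 = (1+R0)·E_α((ϑ−t0)^α c) − 1, where E_α(z) = ∑_{k=0}^{∞} z^k/Γ(αk+1), and M1 = (1+R1)c. -/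
open MeasureTheory Set
open scoped RealInnerProductSpace NNReal

noncomputable section

/-- `ℝ^n`. -/
abbrev Evec (n : ℕ) := EuclideanSpace ℝ (Fin n)

/-- The Riemann–Liouville fractional integral of order `β` with basepoint `t0`:
`(I^β φ)(t) = (1/Γ(β)) ∫_{t0}^{t} (t-τ)^{β-1} φ(τ) dτ`. -/
def RL (t0 β : ℝ) {n : ℕ} (φ : ℝ → Evec n) (t : ℝ) : Evec n :=
  (1 / Real.Gamma β) • ∫ τ in t0..t, ((t - τ) ^ (β - 1)) • φ τ

/-- The Mittag-Leffler function `E_α(z) = ∑_{k} z^k / Γ(αk+1)`. -/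
def ML (α z : ℝ) : ℝ := ∑' k : ℕ, z ^ k / Real.Gamma (α * k + 1)

/-- The binomial coefficient `binom(β, i) = ∏_{j=0}^{i-1} (β-j)/(j+1)`. -/
def glCoef (β : ℝ) (i : ℕ) : ℝ := ∏ j ∈ Finset.range i, ((β - (j : ℝ)) / ((j : ℝ) + 1))

/-- The Grünwald–Letnikov fractional difference
`(Δ_h^{1-α} y)(t) = ∑_{i=0}^{⌊(t-t0)/h⌋} (-1)^i binom(1-α, i) y(t - i h)`. -/
def glDiff (t0 α h : ℝ) {n : ℕ} (y : ℝ → Evec n) (t : ℝ) : Evec n :=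
  ∑ i ∈ Finset.range (⌊(t - t0) / h⌋₊ + 1),
    ((-1 : ℝ) ^ i * glCoef (1 - α) i) • y (t - (i : ℝ) * h)

/-- The state `w0 + h^{α-1} (Δ_h^{1-α} y)(t)` of the original system reconstructed
from the state `y` of the approximating system. -/
def approxState (t0 α h : ℝ) {n : ℕ} (w0 : Evec n) (y : ℝ → Evec n) (t : ℝ) : Evec n :=
  w0 + (h ^ (α - 1)) • glDiff t0 α h y t

/-- Condition (A.1): `f` is continuous. -/
def CondA1 (t0 ϑ : ℝ) {n r s : ℕ} (U : Set (Evec r)) (V : Set (Evec s))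
    (f : ℝ → Evec n → Evec r → Evec s → Evec n) : Prop :=
  ContinuousOn (fun z : ℝ × Evec n × Evec r × Evec s => f z.1 z.2.1 z.2.2.1 z.2.2.2)
    ((Icc t0 ϑ) ×ˢ (univ : Set (Evec n)) ×ˢ U ×ˢ V)

/-- Condition (A.2): `f` is locally Lipschitz in the state variable, uniformly in the rest. -/
def CondA2 (t0 ϑ : ℝ) {n r s : ℕ} (U : Set (Evec r)) (V : Set (Evec s))
    (f : ℝ → Evec n → Evec r → Evec s → Evec n) : Prop :=
  ∀ R : ℝ, 0 ≤ R → ∃ lam > (0 : ℝ), ∀ t ∈ Icc t0 ϑ, ∀ x x' : Evec n, ‖x‖ ≤ R → ‖x'‖ ≤ R →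
    ∀ u ∈ U, ∀ v ∈ V, ‖f t x u v - f t x' u v‖ ≤ lam * ‖x - x'‖

/-- Condition (A.3): sublinear growth `‖f(t,x,u,v)‖ ≤ (1+‖x‖)c`. -/
def CondA3 (t0 ϑ : ℝ) {n r s : ℕ} (U : Set (Evec r)) (V : Set (Evec s))
    (f : ℝ → Evec n → Evec r → Evec s → Evec n) (c : ℝ) : Prop :=
  ∀ t ∈ Icc t0 ϑ, ∀ x : Evec n, ∀ u ∈ U, ∀ v ∈ V, ‖f t x u v‖ ≤ (1 + ‖x‖) * c

/-- Condition (A.4): the saddle point condition in a small game (Isaacs' condition). -/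
def CondA4 (t0 ϑ : ℝ) {n r s : ℕ} (U : Set (Evec r)) (V : Set (Evec s))
    (f : ℝ → Evec n → Evec r → Evec s → Evec n) : Prop :=
  ∀ t ∈ Icc t0 ϑ, ∀ x sv : Evec n,
    sInf ((fun u => sSup ((fun v => ⟪sv, f t x u v⟫) '' V)) '' U)
      = sSup ((fun v => sInf ((fun u => ⟪sv, f t x u v⟫) '' U)) '' V)

/-- Condition (A.5): `σ` depends only on the restriction of its argument to `[t0, ϑ]` and
is continuous with respect to the uniform norm on `C([t0,ϑ], ℝ^n)`. -/
def CondA5 (t0 ϑ : ℝ) {n : ℕ} (σ : (ℝ → Evec n) → ℝ) : Prop :=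
  (∀ x x' : ℝ → Evec n, (∀ t ∈ Icc t0 ϑ, x t = x' t) → σ x = σ x') ∧
  ∀ x : ℝ → Evec n, ContinuousOn x (Icc t0 ϑ) → ∀ ε > (0 : ℝ), ∃ δ > (0 : ℝ),
    ∀ x' : ℝ → Evec n, ContinuousOn x' (Icc t0 ϑ) →
      (∀ t ∈ Icc t0 ϑ, ‖x t - x' t‖ ≤ δ) → |σ x - σ x'| ≤ ε

/-- An admissible position `(t, w(·))` of the original fractional system, together with the
(Caputo-derivative) witness `φ`. -/
def IsAdmissible (t0 ϑ α c R0 : ℝ) {n : ℕ} (t : ℝ) (w φ : ℝ → Evec n) : Prop :=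
  t ∈ Icc t0 ϑ ∧ ContinuousOn w (Icc t0 t) ∧ ‖w t0‖ ≤ R0 ∧
  Measurable φ ∧ (∃ K : ℝ, ∀ᵐ τ ∂(volume.restrict (Icc t0 t)), ‖φ τ‖ ≤ K) ∧
  (∀ τ ∈ Icc t0 t, w τ = w t0 + RL t0 α φ τ) ∧
  (∀ᵐ τ ∂(volume.restrict (Icc t0 t)), ‖φ τ‖ ≤ (1 + ‖w τ‖) * c)

/-- An admissible control realization on `[tstar, ϑ]` with values in `U`. -/
def IsControl {m : ℕ} (tstar ϑ : ℝ) (U : Set (Evec m)) (u : ℝ → Evec m) : Prop :=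
  Measurable u ∧ ∀ t ∈ Icc tstar ϑ, u t ∈ U

/-- The motion of the original fractional system generated from the initial position
`(tstar, wstar(·))` (with Caputo derivative `φstar`) by control realizations `u`, `v`. -/
def IsMotion (t0 ϑ α : ℝ) {n r s : ℕ} (f : ℝ → Evec n → Evec r → Evec s → Evec n)
    (tstar : ℝ) (wstar φstar : ℝ → Evec n) (u : ℝ → Evec r) (v : ℝ → Evec s)
    (x : ℝ → Evec n) : Prop :=
  ContinuousOn x (Icc t0 ϑ) ∧
  (∀ t ∈ Icc t0 tstar, x t = wstar t) ∧
  (∀ t ∈ Icc tstar ϑ, x t = wstar t0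
    + (1 / Real.Gamma α) • (∫ τ in t0..tstar, ((t - τ) ^ (α - 1)) • φstar τ)
    + (1 / Real.Gamma α) • (∫ τ in tstar..t, ((t - τ) ^ (α - 1)) • f τ (x τ) (u τ) (v τ)))

/-- The motion of the approximating retarded-type system, with parameters `w0`, `h`,
generated from the initial position `(tstar, rstar(·))` by control realizations `p`, `q`. -/
def IsApproxMotion (t0 ϑ α : ℝ) {n r s : ℕ} (f : ℝ → Evec n → Evec r → Evec s → Evec n)
    (w0 : Evec n) (h : ℝ) (tstar : ℝ) (rstar : ℝ → Evec n)
    (p : ℝ → Evec r) (q : ℝ → Evec s) (y : ℝ → Evec n) : Prop :=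
  (∃ K : ℝ≥0, LipschitzOnWith K y (Icc t0 ϑ)) ∧
  (∀ t ∈ Icc t0 tstar, y t = rstar t) ∧
  (∀ᵐ t ∂(volume.restrict (Icc tstar ϑ)),
    HasDerivAt y (f t (approxState t0 α h w0 y t) (p t) (q t)) t)

/-- The initial position of the approximating system corresponding to an initial
position `(tstar, wstar(·))` of the original system:
`r*(t) = (I^{1-α}(w*(·) - w*(t0)))(t)`. -/
def rstarOf (t0 α : ℝ) {n : ℕ} (wstar : ℝ → Evec n) : ℝ → Evec n :=
  RL t0 (1 - α) (fun τ => wstar τ - wstar t0)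

/-- A non-anticipative strategy: a map from opponent control realizations (valued in `VO`)
to own control realizations (valued in `UO`) such that a.e. coincidence of inputs up to any
time implies a.e. coincidence of outputs up to that time. -/
def Nonanticipative {a b : ℕ} (tstar ϑ : ℝ) (UO : Set (Evec a)) (VO : Set (Evec b))
    (A : (ℝ → Evec b) → (ℝ → Evec a)) : Prop :=
  (∀ v, IsControl tstar ϑ VO v → IsControl tstar ϑ UO (A v)) ∧
  ∀ that ∈ Icc tstar ϑ, ∀ v v', IsControl tstar ϑ VO v → IsControl tstar ϑ VO v' →
    (∀ᵐ t ∂(volume.restrict (Icc tstar that)), v t = v' t) →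
    (∀ᵐ t ∂(volume.restrict (Icc tstar that)), A v t = A v' t)

/-- The lower value `Γ⁻(t*, w*(·)) = inf_A sup_{v(·)} σ(x(·))` of the original game. -/
def lowerValue (t0 ϑ α : ℝ) {n r s : ℕ} (U : Set (Evec r)) (V : Set (Evec s))
    (f : ℝ → Evec n → Evec r → Evec s → Evec n) (σ : (ℝ → Evec n) → ℝ)
    (tstar : ℝ) (wstar φstar : ℝ → Evec n) : ℝ :=
  sInf { a : ℝ | ∃ A : (ℝ → Evec s) → (ℝ → Evec r), Nonanticipative tstar ϑ U V A ∧
    a = sSup { g : ℝ | ∃ v x, IsControl tstar ϑ V v ∧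
      IsMotion t0 ϑ α f tstar wstar φstar (A v) v x ∧ g = σ x } }

/-- The upper value `Γ⁺(t*, w*(·)) = sup_B inf_{u(·)} σ(x(·))` of the original game. -/
def upperValue (t0 ϑ α : ℝ) {n r s : ℕ} (U : Set (Evec r)) (V : Set (Evec s))
    (f : ℝ → Evec n → Evec r → Evec s → Evec n) (σ : (ℝ → Evec n) → ℝ)
    (tstar : ℝ) (wstar φstar : ℝ → Evec n) : ℝ :=
  sSup { a : ℝ | ∃ B : (ℝ → Evec r) → (ℝ → Evec s), Nonanticipative tstar ϑ V U B ∧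
    a = sInf { g : ℝ | ∃ u x, IsControl tstar ϑ U u ∧
      IsMotion t0 ϑ α f tstar wstar φstar u (B u) x ∧ g = σ x } }

/-- The lower value of the approximating differential game with parameters `w0`, `h`,
from the initial position `(tstar, rstar(·))`. -/
def approxValue (t0 ϑ α : ℝ) {n r s : ℕ} (U : Set (Evec r)) (V : Set (Evec s))
    (f : ℝ → Evec n → Evec r → Evec s → Evec n) (σ : (ℝ → Evec n) → ℝ)
    (w0 : Evec n) (h : ℝ) (tstar : ℝ) (rstar : ℝ → Evec n) : ℝ :=
  sInf { a : ℝ | ∃ A : (ℝ → Evec s) → (ℝ → Evec r), Nonanticipative tstar ϑ U V A ∧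
    a = sSup { g : ℝ | ∃ q y, IsControl tstar ϑ V q ∧
      IsApproxMotion t0 ϑ α f w0 h tstar rstar (A q) q y ∧
      g = σ (approxState t0 α h w0 y) } }

/-- The upper value of the approximating differential game. -/
def approxUpperValue (t0 ϑ α : ℝ) {n r s : ℕ} (U : Set (Evec r)) (V : Set (Evec s))
    (f : ℝ → Evec n → Evec r → Evec s → Evec n) (σ : (ℝ → Evec n) → ℝ)
    (w0 : Evec n) (h : ℝ) (tstar : ℝ) (rstar : ℝ → Evec n) : ℝ :=
  sSup { a : ℝ | ∃ B : (ℝ → Evec r) → (ℝ → Evec s), Nonanticipative tstar ϑ V U B ∧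
    a = sInf { g : ℝ | ∃ p y, IsControl tstar ϑ U p ∧
      IsApproxMotion t0 ϑ α f w0 h tstar rstar p (B p) y ∧
      g = σ (approxState t0 α h w0 y) } }

/-- The value `Γ_h(t*, w*(·))` of the approximating game for an admissible position of the
original system. -/
def GammaH (t0 ϑ α : ℝ) {n r s : ℕ} (U : Set (Evec r)) (V : Set (Evec s))
    (f : ℝ → Evec n → Evec r → Evec s → Evec n) (σ : (ℝ → Evec n) → ℝ)
    (h : ℝ) (tstar : ℝ) (wstar : ℝ → Evec n) : ℝ :=
  approxValue t0 ϑ α U V f σ (wstar t0) h tstar (rstarOf t0 α wstar)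

/-- An admissible position `(t, rr(·)) ∈ G_h^0` of the approximating system, where
`ctilde` is the constant `c̃_h`. -/
def IsApproxAdmissiblePos (t0 ϑ : ℝ) (ctilde : ℝ) {n : ℕ} (t : ℝ) (rr : ℝ → Evec n) : Prop :=
  t ∈ Icc t0 ϑ ∧ rr t0 = 0 ∧ (∃ K : ℝ≥0, LipschitzOnWith K rr (Icc t0 t)) ∧
  ∀ᵐ τ ∂(volume.restrict (Icc t0 t)), ∀ d : Evec n, HasDerivAt rr d τ →
    ‖d‖ ≤ (1 + sSup ((fun ξ => ‖rr ξ‖) '' Icc t0 τ)) * ctilde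

/-- A partition `t* = τ_1 < τ_2 < … < τ_{k+1} = ϑ` of `[t*, ϑ]`. -/
def IsPartition (tstar ϑ : ℝ) (k : ℕ) (τ : ℕ → ℝ) : Prop :=
  1 ≤ k ∧ τ 1 = tstar ∧ τ (k + 1) = ϑ ∧ ∀ j : ℕ, 1 ≤ j → j ≤ k → τ j < τ (j + 1)

/-- `u0` attains `min_{u ∈ U} max_{v ∈ V} ⟨sv, f(t, x, u, v)⟩`. -/
def MinMaxPoint {n r s : ℕ} (U : Set (Evec r)) (V : Set (Evec s))
    (f : ℝ → Evec n → Evec r → Evec s → Evec n) (t : ℝ) (x sv : Evec n) (u0 : Evec r) : Prop :=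
  u0 ∈ U ∧ ∀ u ∈ U,
    sSup ((fun v => ⟪sv, f t x u0 v⟫) '' V) ≤ sSup ((fun v => ⟪sv, f t x u v⟫) '' V)

/-- `v0` attains `max_{v ∈ V} min_{u ∈ U} ⟨sv, f(t, x, u, v)⟩`. -/
def MaxMinPoint {n r s : ℕ} (U : Set (Evec r)) (V : Set (Evec s))
    (f : ℝ → Evec n → Evec r → Evec s → Evec n) (t : ℝ) (x sv : Evec n) (v0 : Evec s) : Prop :=
  v0 ∈ V ∧ ∀ v ∈ V,
    sInf ((fun u => ⟪sv, f t x u v⟫) '' U) ≤ sInf ((fun u => ⟪sv, f t x u v0⟫) '' U)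

/-- The first player's mutual aiming rule: on each step `[τ_j, τ_{j+1})`, with
`s_j = x(τ_j) - w0 - h^{α-1}(Δ_h^{1-α} y)(τ_j)`, the control `u` in the original system
attains the corresponding minimax and the control `q` in the guide attains the corresponding
maximin, both controls being constant on the step. -/
def FirstAiming (t0 α : ℝ) {n r s : ℕ} (U : Set (Evec r)) (V : Set (Evec s))
    (f : ℝ → Evec n → Evec r → Evec s → Evec n) (w0 : Evec n) (h : ℝ)
    (k : ℕ) (τ : ℕ → ℝ) (x y : ℝ → Evec n) (u : ℝ → Evec r) (q : ℝ → Evec s) : Prop :=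
  ∀ j : ℕ, 1 ≤ j → j ≤ k →
    MinMaxPoint U V f (τ j) (x (τ j))
      (x (τ j) - approxState t0 α h w0 y (τ j)) (u (τ j)) ∧
    MaxMinPoint U V f (τ j) (approxState t0 α h w0 y (τ j))
      (x (τ j) - approxState t0 α h w0 y (τ j)) (q (τ j)) ∧
    ∀ t ∈ Ico (τ j) (τ (j + 1)), u t = u (τ j) ∧ q t = q (τ j)

/-- The second player's mutual aiming rule: on each step `[τ_j, τ_{j+1})`, with
`s_j = w0 + h^{α-1}(Δ_h^{1-α} y)(τ_j) - x(τ_j)`, the control `v` in the original system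
attains the corresponding maximin and the control `p` in the guide attains the corresponding
minimax, both controls being constant on the step. -/
def SecondAiming (t0 α : ℝ) {n r s : ℕ} (U : Set (Evec r)) (V : Set (Evec s))
    (f : ℝ → Evec n → Evec r → Evec s → Evec n) (w0 : Evec n) (h : ℝ)
    (k : ℕ) (τ : ℕ → ℝ) (x y : ℝ → Evec n) (v : ℝ → Evec s) (p : ℝ → Evec r) : Prop :=
  ∀ j : ℕ, 1 ≤ j → j ≤ k →
    MaxMinPoint U V f (τ j) (x (τ j))
      (approxState t0 α h w0 y (τ j) - x (τ j)) (v (τ j)) ∧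
    MinMaxPoint U V f (τ j) (approxState t0 α h w0 y (τ j))
      (approxState t0 α h w0 y (τ j) - x (τ j)) (p (τ j)) ∧
    ∀ t ∈ Ico (τ j) (τ (j + 1)), v t = v (τ j) ∧ p t = p (τ j)


/-!
With `g = 1 + ‖w‖`, the representation `w = w(t0) + I^α φ` and the growth bound on `φ` give the
Volterra inequality `g ≤ (1 + R0) + c I^α g`. Iterating it, using the Beta integral
`I^α [(s - t0)^{αk} / Γ(αk + 1)] = (τ - t0)^{α(k+1)} / Γ(α(k+1) + 1)`, bounds `g` by partial sums
of the Mittag-Leffler series plus a remainder that vanishes because the series converges (ratio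
test, with the ratio of consecutive Gamma values controlled by log-convexity of `Γ`). The bounds on
`φ` follow, and the Hölder bound comes from splitting `I^α φ(τ) - I^α φ(τ')` at `τ'` and
integrating the decreasing kernel `(τ - s)^{α-1}` explicitly.
-/

open Filter

theorem integral_rpow_mul_one_sub_rpow {a b : ℝ} (ha : 0 < a) (hb : 0 < b) :
    ∫ x in (0 : ℝ)..1, x ^ (a - 1) * (1 - x) ^ (b - 1) =
      Real.Gamma a * Real.Gamma b / Real.Gamma (a + b) := by
  have hcast : Complex.betaIntegral a b =
      ((∫ x in (0 : ℝ)..1, x ^ (a - 1) * (1 - x) ^ (b - 1) : ℝ) : ℂ) := by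
    rw [Complex.betaIntegral, ← intervalIntegral.integral_ofReal]
    refine intervalIntegral.integral_congr fun x hx => ?_
    rw [uIcc_of_le zero_le_one] at hx
    push_cast
    rw [Complex.ofReal_cpow hx.1, Complex.ofReal_cpow (by linarith [hx.2])]
    push_cast
    ring
  have h := ProbabilityTheory.beta_eq_betaIntegralReal a b ha hb
  rw [hcast, Complex.ofReal_re] at h
  exact h.symm

theorem integral_sub_rpow_mul_rpow_sub {t0 τ α β : ℝ} (hτ : t0 ≤ τ) (hα : 0 < α) (hβ : 0 ≤ β) :
    ∫ s in t0..τ, (τ - s) ^ (α - 1) * (s - t0) ^ β =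
      Real.Gamma α * Real.Gamma (β + 1) / Real.Gamma (α + β + 1) * (τ - t0) ^ (α + β) := by
  rcases hτ.eq_or_lt with rfl | hlt
  · simp [Real.zero_rpow (by positivity : α + β ≠ 0)]
  set d := τ - t0
  have hd0 : 0 < d := sub_pos.2 hlt
  have hsub := intervalIntegral.integral_comp_mul_add (a := 0) (b := 1)
    (fun s => (τ - s) ^ (α - 1) * (s - t0) ^ β) hd0.ne' t0
  rw [mul_zero, zero_add, mul_one, show d + t0 = τ by ring] at hsub
  have hscale : ∫ x in (0 : ℝ)..1, (τ - (d * x + t0)) ^ (α - 1) * (d * x + t0 - t0) ^ β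
      = d ^ (α - 1) * d ^ β * ∫ x in (0 : ℝ)..1, x ^ (β + 1 - 1) * (1 - x) ^ (α - 1) := by
    rw [← intervalIntegral.integral_const_mul]
    refine intervalIntegral.integral_congr fun x hx => ?_
    rw [uIcc_of_le zero_le_one] at hx
    rw [show τ - (d * x + t0) = d * (1 - x) by ring, show d * x + t0 - t0 = d * x by ring,
      add_sub_cancel_right, Real.mul_rpow hd0.le (by linarith [hx.2]), Real.mul_rpow hd0.le hx.1]
    ring
  rw [hscale, integral_rpow_mul_one_sub_rpow (by linarith) hα, smul_eq_mul,
    eq_inv_mul_iff_mul_eq₀ hd0.ne'] at hsub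
  rw [← hsub, show β + 1 + α = α + β + 1 by ring, Real.rpow_add hd0, Real.rpow_sub_one hd0.ne']
  field_simp

theorem Gamma_add_one_sub_mul_rpow_le {α x : ℝ} (hα : α ∈ Ioo 0 1) (hx : 0 < x) :
    Real.Gamma (x + 1 - α) * x ^ α ≤ Real.Gamma (x + 1) := by
  have hΓ := Real.Gamma_pos_of_pos hx
  have h := Real.Gamma_mul_add_mul_le_rpow_Gamma_mul_rpow_Gamma hx (by linarith : 0 < x + 1)
    hα.1 (sub_pos.2 hα.2) (add_sub_cancel α 1)
  rw [show α * x + (1 - α) * (x + 1) = x + 1 - α by ring, Real.Gamma_add_one hx.ne',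
    Real.mul_rpow hx.le hΓ.le] at h
  calc Real.Gamma (x + 1 - α) * x ^ α
      ≤ Real.Gamma x ^ α * (x ^ (1 - α) * Real.Gamma x ^ (1 - α)) * x ^ α := by gcongr
    _ = Real.Gamma x ^ (α + (1 - α)) * x ^ (1 - α + α) := by
      rw [Real.rpow_add hΓ, Real.rpow_add hx]; ring
    _ = Real.Gamma (x + 1) := by
      rw [Real.Gamma_add_one hx.ne']; simp [mul_comm]

theorem summable_mittagLeffler {α : ℝ} (hα : α ∈ Ioo 0 1) (z : ℝ) :
    Summable fun k : ℕ => z ^ k / Real.Gamma (α * k + 1) := by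
  have hlim : Tendsto (fun k : ℕ => (α * (k + 1)) ^ α) atTop atTop :=
    (tendsto_rpow_atTop hα.1).comp <| Tendsto.const_mul_atTop hα.1 <|
      tendsto_atTop_add_const_right _ 1 tendsto_natCast_atTop_atTop
  have hα0 := hα.1
  refine summable_of_ratio_norm_eventually_le (r := 1 / 2) (by norm_num) ?_
  filter_upwards [hlim.eventually_ge_atTop (2 * |z|)] with k hk
  have hP : 0 < (α * (k + 1)) ^ α := by positivity
  have hG : 0 < Real.Gamma (α * k + 1) := Real.Gamma_pos_of_pos (by positivity)
  have hG' : 0 < Real.Gamma (α * (k + 1) + 1) := Real.Gamma_pos_of_pos (by positivity)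
  have hratio := Gamma_add_one_sub_mul_rpow_le hα (x := α * (k + 1)) (by positivity)
  rw [show α * (k + 1) + 1 - α = α * k + 1 by ring] at hratio
  simp only [norm_div, norm_pow, Real.norm_eq_abs, abs_of_pos hG, Nat.cast_succ, abs_of_pos hG']
  calc |z| ^ (k + 1) / Real.Gamma (α * (k + 1) + 1)
      ≤ |z| ^ (k + 1) / (Real.Gamma (α * k + 1) * (α * (k + 1)) ^ α) := by gcongr
    _ = |z| / (α * (k + 1)) ^ α * (|z| ^ k / Real.Gamma (α * k + 1)) := by
      field_simp; ring
    _ ≤ 1 / 2 * (|z| ^ k / Real.Gamma (α * k + 1)) := by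
      gcongr ?_ * _
      rw [div_le_iff₀ hP]; linarith

theorem one_le_ML {α z : ℝ} (hα : α ∈ Ioo 0 1) (hz : 0 ≤ z) : 1 ≤ ML α z := by
  simpa [ML, Real.Gamma_one] using
    (summable_mittagLeffler hα z).le_tsum 0 fun k _ => by have := hα.1; positivity

theorem ML_monotoneOn {α : ℝ} (hα : α ∈ Ioo 0 1) : MonotoneOn (ML α) (Ici 0) :=
  fun z hz z' _ hzz' => (summable_mittagLeffler hα z).tsum_le_tsum
    (fun k => by have := hα.1; gcongr) (summable_mittagLeffler hα z')

theorem intervalIntegrable_sub_rpow {r : ℝ} (hr : -1 < r) (τ a b : ℝ) :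
    IntervalIntegrable (fun s => (τ - s) ^ r) volume a b := by
  simpa using
    (intervalIntegral.intervalIntegrable_rpow' (a := τ - a) (b := τ - b) hr).comp_sub_left τ

theorem integral_sub_rpow_sub_one {α : ℝ} (hα : 0 < α) (τ a b : ℝ) :
    ∫ s in a..b, (τ - s) ^ (α - 1) = ((τ - a) ^ α - (τ - b) ^ α) / α := by
  rw [intervalIntegral.integral_comp_sub_left (fun x => x ^ (α - 1)) τ,
    integral_rpow (Or.inl (by linarith)), sub_add_cancel]

theorem integral_sub_rpow_mul_pow_div_Gamma {t0 τ α : ℝ} (hα : 0 < α) (hτ : t0 ≤ τ)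
    (c : ℝ) (k : ℕ) :
    c / Real.Gamma α * ∫ s in t0..τ,
        (τ - s) ^ (α - 1) * (((s - t0) ^ α * c) ^ k / Real.Gamma (α * k + 1)) =
      ((τ - t0) ^ α * c) ^ (k + 1) / Real.Gamma (α * ↑(k + 1) + 1) := by
  have hpow : ∀ x : ℝ, 0 ≤ x → ∀ m : ℕ, (x ^ α) ^ m = x ^ (α * m) := fun x hx m => by
    rw [← Real.rpow_natCast, ← Real.rpow_mul hx]
  have hcongr : ∫ s in t0..τ, (τ - s) ^ (α - 1) * (((s - t0) ^ α * c) ^ k / Real.Gamma (α * k + 1))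
      = c ^ k / Real.Gamma (α * k + 1) * ∫ s in t0..τ, (τ - s) ^ (α - 1) * (s - t0) ^ (α * k) := by
    rw [← intervalIntegral.integral_const_mul]
    refine intervalIntegral.integral_congr fun s hs => ?_
    rw [uIcc_of_le hτ] at hs
    simp only [mul_pow, hpow _ (sub_nonneg.2 hs.1)]
    ring
  rw [hcongr, integral_sub_rpow_mul_rpow_sub hτ hα (by positivity), mul_pow,
    hpow _ (sub_nonneg.2 hτ), show α + α * k = α * ↑(k + 1) by push_cast; ring]
  field_simp
  ring

theorem integral_sub_rpow_mul_le_of_le {t0 τ α : ℝ} (hα : 0 < α) (hτ : t0 ≤ τ) {f g : ℝ → ℝ}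
    (hf : ContinuousOn f (Icc t0 τ)) (hg : ContinuousOn g (Icc t0 τ))
    (hfg : ∀ s ∈ Icc t0 τ, f s ≤ g s) :
    ∫ s in t0..τ, (τ - s) ^ (α - 1) * f s ≤ ∫ s in t0..τ, (τ - s) ^ (α - 1) * g s := by
  have hk := intervalIntegrable_sub_rpow (by linarith : -1 < α - 1) τ t0 τ
  refine intervalIntegral.integral_mono_on hτ (hk.mul_continuousOn ?_) (hk.mul_continuousOn ?_)
    fun s hs => mul_le_mul_of_nonneg_left (hfg s hs) (Real.rpow_nonneg (by linarith [hs.2]) _)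
  all_goals rwa [uIcc_of_le hτ]

theorem le_sum_of_le_add_integral {α c A B t0 t : ℝ} (hα : 0 < α) (hc : 0 ≤ c) {g : ℝ → ℝ}
    (hg : ContinuousOn g (Icc t0 t)) (hgB : ∀ τ ∈ Icc t0 t, g τ ≤ B)
    (h : ∀ τ ∈ Icc t0 t, g τ ≤ A + c / Real.Gamma α * ∫ s in t0..τ, (τ - s) ^ (α - 1) * g s)
    (N : ℕ) {τ : ℝ} (hτ : τ ∈ Icc t0 t) :
    g τ ≤ A * ∑ k ∈ Finset.range N, ((τ - t0) ^ α * c) ^ k / Real.Gamma (α * k + 1) +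
      B * (((τ - t0) ^ α * c) ^ N / Real.Gamma (α * N + 1)) := by
  set T : ℕ → ℝ → ℝ := fun k s => ((s - t0) ^ α * c) ^ k / Real.Gamma (α * k + 1) with hT
  have hTcont : ∀ k, Continuous (T k) := fun k =>
    ((((Real.continuous_rpow_const hα.le).comp (continuous_sub_right t0)).mul
      continuous_const).pow k).div_const _
  change g τ ≤ A * ∑ k ∈ Finset.range N, T k τ + B * T N τ
  induction N generalizing τ with
  | zero => simpa [hT] using hgB τ hτ
  | succ N ih =>
    have hsub : Icc t0 τ ⊆ Icc t0 t := Icc_subset_Icc_right hτ.2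
    have hkT : ∀ k, IntervalIntegrable (fun s => (τ - s) ^ (α - 1) * T k s) volume t0 τ :=
      fun k => (intervalIntegrable_sub_rpow (by linarith) τ t0 τ).mul_continuousOn
        (hTcont k).continuousOn
    have hstep : ∀ k, c / Real.Gamma α * ∫ s in t0..τ, (τ - s) ^ (α - 1) * T k s =
        T (k + 1) τ := fun k => integral_sub_rpow_mul_pow_div_Gamma hα hτ.1 c k
    have hlin : c / Real.Gamma α * ∫ s in t0..τ, (τ - s) ^ (α - 1) *
          (A * ∑ k ∈ Finset.range N, T k s + B * T N s) =
        A * ∑ k ∈ Finset.range N, T (k + 1) τ + B * T (N + 1) τ := by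
      have hsumInt : IntervalIntegrable
          (fun s => ∑ k ∈ Finset.range N, A * ((τ - s) ^ (α - 1) * T k s)) volume t0 τ := by
        simpa only [Finset.sum_fn] using IntervalIntegrable.sum _ fun k _ => (hkT k).const_mul A
      simp_rw [mul_add, Finset.mul_sum, mul_left_comm _ A, mul_left_comm _ B]
      rw [intervalIntegral.integral_add hsumInt ((hkT N).const_mul B),
        intervalIntegral.integral_finsetSum fun k _ => (hkT k).const_mul A]
      simp_rw [intervalIntegral.integral_const_mul, mul_add, Finset.mul_sum,
        mul_left_comm (c / _), hstep]
    calc g τ ≤ A + c / Real.Gamma α * ∫ s in t0..τ, (τ - s) ^ (α - 1) * g s := h τ hτ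
      _ ≤ A + c / Real.Gamma α * ∫ s in t0..τ, (τ - s) ^ (α - 1) *
            (A * ∑ k ∈ Finset.range N, T k s + B * T N s) := by
        refine (add_le_add_iff_left A).2 (mul_le_mul_of_nonneg_left ?_
          (div_nonneg hc (Real.Gamma_pos_of_pos hα).le))
        exact integral_sub_rpow_mul_le_of_le hα hτ.1 (hg.mono hsub)
          (Continuous.continuousOn (by fun_prop)) fun s hs => ih (hsub hs)
      _ = A * ∑ k ∈ Finset.range (N + 1), T k τ + B * T (N + 1) τ := by
        rw [hlin, Finset.sum_range_succ', mul_add A]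
        simp [hT]
        ring

theorem le_mul_ML_of_le_add_integral {α c A t0 t : ℝ} (hα : α ∈ Ioo 0 1) (hc : 0 ≤ c)
    {g : ℝ → ℝ} (hg : ContinuousOn g (Icc t0 t))
    (h : ∀ τ ∈ Icc t0 t, g τ ≤ A + c / Real.Gamma α * ∫ s in t0..τ, (τ - s) ^ (α - 1) * g s)
    {τ : ℝ} (hτ : τ ∈ Icc t0 t) : g τ ≤ A * ML α ((τ - t0) ^ α * c) := by
  obtain ⟨B, hB⟩ := isCompact_Icc.exists_bound_of_continuousOn hg
  have hsum := summable_mittagLeffler hα ((τ - t0) ^ α * c)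
  have hlim := (hsum.hasSum.tendsto_sum_nat.const_mul A).add (hsum.tendsto_atTop_zero.const_mul B)
  rw [mul_zero, add_zero] at hlim
  exact ge_of_tendsto' hlim fun N => le_sum_of_le_add_integral hα.1 hc hg
    (fun s hs => (le_abs_self _).trans (hB s hs)) h N hτ

theorem IntervalIntegrable.smul_of_ae_norm_le {E : Type*} [NormedAddCommGroup E]
    [NormedSpace ℝ E] {F : ℝ → ℝ} {φ : ℝ → E} {a b C : ℝ} (hF : IntervalIntegrable F volume a b)
    (hφ : AEStronglyMeasurable φ (volume.restrict (uIoc a b)))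
    (hC : ∀ᵐ s ∂volume.restrict (uIoc a b), ‖φ s‖ ≤ C) :
    IntervalIntegrable (fun s => F s • φ s) volume a b :=
  intervalIntegrable_iff.2 (hF.def'.smul_bdd C hφ hC)

theorem norm_RL_le {n : ℕ} {t0 α τ : ℝ} (hα : 0 < α) (hτ : t0 ≤ τ) {φ : ℝ → Evec n}
    {G : ℝ → ℝ} (hG : ContinuousOn G (Icc t0 τ))
    (hφG : ∀ᵐ s ∂volume.restrict (Icc t0 τ), ‖φ s‖ ≤ G s) :
    ‖RL t0 α φ τ‖ ≤ 1 / Real.Gamma α * ∫ s in t0..τ, (τ - s) ^ (α - 1) * G s := by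
  rw [RL, norm_smul, Real.norm_of_nonneg (by positivity)]
  refine mul_le_mul_of_nonneg_left (intervalIntegral.norm_integral_le_of_norm_le hτ ?_
    ((intervalIntegrable_sub_rpow (by linarith) τ t0 τ).mul_continuousOn
      (by rwa [uIcc_of_le hτ]))) (by positivity)
  rw [ae_restrict_iff' measurableSet_Icc] at hφG
  filter_upwards [hφG] with s hs hs'
  have hk : 0 ≤ (τ - s) ^ (α - 1) := Real.rpow_nonneg (by linarith [hs'.2]) _
  rw [norm_smul, Real.norm_of_nonneg hk]
  exact mul_le_mul_of_nonneg_left (hs (Ioc_subset_Icc_self hs')) hk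

theorem norm_integral_sub_rpow_smul_le {E : Type*} [NormedAddCommGroup E] [NormedSpace ℝ E]
    {a τ α M : ℝ} (hα : 0 < α) (ha : a ≤ τ) {φ : ℝ → E}
    (hM : ∀ᵐ s ∂volume.restrict (Ioc a τ), ‖φ s‖ ≤ M) :
    ‖∫ s in a..τ, (τ - s) ^ (α - 1) • φ s‖ ≤ M * (τ - a) ^ α / α := by
  have hbound : ∫ s in a..τ, (τ - s) ^ (α - 1) * M = M * (τ - a) ^ α / α := by
    rw [intervalIntegral.integral_mul_const, integral_sub_rpow_sub_one hα, sub_self,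
      Real.zero_rpow hα.ne', sub_zero]
    ring
  rw [← hbound]
  refine intervalIntegral.norm_integral_le_of_norm_le ha ?_
    ((intervalIntegrable_sub_rpow (by linarith) τ a τ).mul_const M)
  filter_upwards [(ae_restrict_iff' measurableSet_Ioc).1 hM] with s hs hs'
  have hk : 0 ≤ (τ - s) ^ (α - 1) := Real.rpow_nonneg (by linarith [hs'.2]) _
  rw [norm_smul, Real.norm_of_nonneg hk]
  exact mul_le_mul_of_nonneg_left (hs hs') hk

theorem norm_integral_sub_rpow_sub_sub_rpow_smul_le {E : Type*} [NormedAddCommGroup E]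
    [NormedSpace ℝ E] {t0 τ' τ α M : ℝ} (hα : α ∈ Ioo 0 1) (h1 : t0 ≤ τ') (h2 : τ' ≤ τ)
    {φ : ℝ → E} (hM : ∀ᵐ s ∂volume.restrict (Ioc t0 τ'), ‖φ s‖ ≤ M) :
    ‖∫ s in t0..τ', ((τ - s) ^ (α - 1) - (τ' - s) ^ (α - 1)) • φ s‖ ≤
      M * ((τ' - t0) ^ α - (τ - t0) ^ α + (τ - τ') ^ α) / α := by
  have hr : -1 < α - 1 := by linarith [hα.1]
  have hbound : ∫ s in t0..τ', ((τ' - s) ^ (α - 1) - (τ - s) ^ (α - 1)) * M =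
      M * ((τ' - t0) ^ α - (τ - t0) ^ α + (τ - τ') ^ α) / α := by
    rw [intervalIntegral.integral_mul_const, intervalIntegral.integral_sub
      (intervalIntegrable_sub_rpow hr _ _ _) (intervalIntegrable_sub_rpow hr _ _ _),
      integral_sub_rpow_sub_one hα.1, integral_sub_rpow_sub_one hα.1, sub_self,
      Real.zero_rpow hα.1.ne']
    ring
  rw [← hbound]
  refine intervalIntegral.norm_integral_le_of_norm_le h1 ?_
    (((intervalIntegrable_sub_rpow hr _ _ _).sub
      (intervalIntegrable_sub_rpow hr _ _ _)).mul_const M)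
  -- at `s = τ'` Lean's `0 ^ (α - 1) = 0` would break the monotonicity of the kernel
  filter_upwards [(ae_restrict_iff' measurableSet_Ioc).1 hM, volume.ae_ne τ'] with s hs hne hs'
  have hsτ' : s < τ' := lt_of_le_of_ne hs'.2 hne
  have hmono : (τ - s) ^ (α - 1) ≤ (τ' - s) ^ (α - 1) :=
    Real.rpow_le_rpow_of_nonpos (by linarith) (by linarith) (by linarith [hα.2])
  rw [norm_smul, Real.norm_of_nonpos (by linarith), neg_sub]
  exact mul_le_mul_of_nonneg_left (hs hs') (by linarith)

theorem norm_RL_sub_RL_le {n : ℕ} {t0 t α M : ℝ} (hα : α ∈ Ioo 0 1) (hM0 : 0 ≤ M)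
    {φ : ℝ → Evec n} (hφ : AEStronglyMeasurable φ volume)
    (hM : ∀ᵐ s ∂volume.restrict (Icc t0 t), ‖φ s‖ ≤ M) {τ' τ : ℝ}
    (h1 : t0 ≤ τ') (h2 : τ' ≤ τ) (h3 : τ ≤ t) :
    ‖RL t0 α φ τ - RL t0 α φ τ'‖ ≤ 2 * M / Real.Gamma (α + 1) * (τ - τ') ^ α := by
  have hr : -1 < α - 1 := by linarith [hα.1]
  have hΓ := Real.Gamma_pos_of_pos hα.1
  have hM1 : ∀ᵐ s ∂volume.restrict (Ioc t0 τ'), ‖φ s‖ ≤ M := ae_restrict_of_ae_restrict_of_subset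
    (Ioc_subset_Icc_self.trans (Icc_subset_Icc_right (h2.trans h3))) hM
  have hM2 : ∀ᵐ s ∂volume.restrict (Ioc τ' τ), ‖φ s‖ ≤ M :=
    ae_restrict_of_ae_restrict_of_subset (Ioc_subset_Icc_self.trans (Icc_subset_Icc h1 h3)) hM
  have hintegrable : ∀ {a b : ℝ} (x : ℝ), a ≤ b → (∀ᵐ s ∂volume.restrict (Ioc a b), ‖φ s‖ ≤ M) →
      IntervalIntegrable (fun s => (x - s) ^ (α - 1) • φ s) volume a b := fun x hab h =>
    (intervalIntegrable_sub_rpow hr x _ _).smul_of_ae_norm_le hφ.restrict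
      (by rwa [uIoc_of_le hab])
  have hsplit : RL t0 α φ τ - RL t0 α φ τ' = (1 / Real.Gamma α) •
      ((∫ s in t0..τ', ((τ - s) ^ (α - 1) - (τ' - s) ^ (α - 1)) • φ s) +
        ∫ s in τ'..τ, (τ - s) ^ (α - 1) • φ s) := by
    simp_rw [RL, ← smul_sub, sub_smul]
    rw [intervalIntegral.integral_sub (hintegrable τ h1 hM1) (hintegrable τ' h1 hM1),
      ← intervalIntegral.integral_add_adjacent_intervals (hintegrable τ h1 hM1)
        (hintegrable τ h2 hM2)]
    abel_nf
  have hmono : (τ' - t0) ^ α ≤ (τ - t0) ^ α :=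
    Real.rpow_le_rpow (by linarith) (by linarith) hα.1.le
  rw [hsplit, norm_smul, Real.norm_of_nonneg (by positivity)]
  calc 1 / Real.Gamma α * ‖(∫ s in t0..τ', ((τ - s) ^ (α - 1) - (τ' - s) ^ (α - 1)) • φ s) +
        ∫ s in τ'..τ, (τ - s) ^ (α - 1) • φ s‖
      ≤ 1 / Real.Gamma α * (M * ((τ' - t0) ^ α - (τ - t0) ^ α + (τ - τ') ^ α) / α +
          M * (τ - τ') ^ α / α) := by
        gcongr
        exact (norm_add_le _ _).trans (add_le_add
          (norm_integral_sub_rpow_sub_sub_rpow_smul_le hα h1 h2 hM1)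
          (norm_integral_sub_rpow_smul_le hα.1 h2 hM2))
    _ ≤ 1 / Real.Gamma α * (2 * M * (τ - τ') ^ α / α) := by
        have hnum : M * ((τ' - t0) ^ α - (τ - t0) ^ α + (τ - τ') ^ α) + M * (τ - τ') ^ α ≤
            2 * M * (τ - τ') ^ α := by
          nlinarith [mul_le_mul_of_nonneg_left hmono hM0]
        rw [← add_div]
        gcongr
        exact hα.1.le
    _ = 2 * M / Real.Gamma (α + 1) * (τ - τ') ^ α := by
        rw [Real.Gamma_add_one hα.1.ne']
        field_simp

theorem isAdmissible_const {n : ℕ} {t0 ϑ α c R0 t : ℝ} (ht : t ∈ Icc t0 ϑ) {w0 : Evec n}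
    (hw0 : ‖w0‖ ≤ R0) (hc : 0 ≤ c) :
    IsAdmissible t0 ϑ α c R0 t (fun _ => w0) (fun _ => 0) :=
  ⟨ht, continuousOn_const, hw0, measurable_const, ⟨0, by simp⟩, fun τ _ => by simp [RL],
    ae_of_all _ fun τ => by simp only [norm_zero]; positivity⟩

theorem IsAdmissible.one_add_norm_le {n : ℕ} {t0 ϑ α c R0 t : ℝ} {w φ : ℝ → Evec n}
    (h : IsAdmissible t0 ϑ α c R0 t w φ) (hα : α ∈ Ioo 0 1) (hc : 0 ≤ c) {τ : ℝ}
    (hτ : τ ∈ Icc t0 t) :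
    1 + ‖w τ‖ ≤ (1 + R0) * ML α ((ϑ - t0) ^ α * c) := by
  obtain ⟨ht, hw, hw0, -, -, hRL, hφ⟩ := h
  have hvolterra : ∀ τ ∈ Icc t0 t, 1 + ‖w τ‖ ≤
      (1 + R0) + c / Real.Gamma α * ∫ s in t0..τ, (τ - s) ^ (α - 1) * (1 + ‖w s‖) := by
    intro τ hτ
    have hsub : Icc t0 τ ⊆ Icc t0 t := Icc_subset_Icc_right hτ.2
    have hI := norm_RL_le hα.1 hτ.1 (φ := φ) (G := fun s => c * (1 + ‖w s‖))
      (continuousOn_const.mul (continuousOn_const.add (hw.mono hsub).norm))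
      (by filter_upwards [ae_restrict_of_ae_restrict_of_subset hsub hφ] with s hs; linarith)
    simp_rw [mul_left_comm _ c, intervalIntegral.integral_const_mul] at hI
    calc 1 + ‖w τ‖ = 1 + ‖w t0 + RL t0 α φ τ‖ := by rw [← hRL τ hτ]
      _ ≤ 1 + R0 + ‖RL t0 α φ τ‖ := by linarith [norm_add_le (w t0) (RL t0 α φ τ)]
      _ ≤ _ := by rw [div_eq_mul_one_div c, mul_comm c, mul_assoc]; linarith
  have hz : 0 ≤ (τ - t0) ^ α * c := mul_nonneg (Real.rpow_nonneg (by linarith [hτ.1]) _) hc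
  calc 1 + ‖w τ‖ ≤ (1 + R0) * ML α ((τ - t0) ^ α * c) :=
        le_mul_ML_of_le_add_integral hα hc (continuousOn_const.add hw.norm) hvolterra hτ
    _ ≤ (1 + R0) * ML α ((ϑ - t0) ^ α * c) := by
        have hle : (τ - t0) ^ α * c ≤ (ϑ - t0) ^ α * c := mul_le_mul_of_nonneg_right
          (Real.rpow_le_rpow (sub_nonneg.2 hτ.1) (by linarith [hτ.2, ht.2]) hα.1.le) hc
        exact mul_le_mul_of_nonneg_left (ML_monotoneOn hα hz (hz.trans hle) hle)
          (by linarith [norm_nonneg (w t0)])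

theorem IsAdmissible.ae_norm_le {n : ℕ} {t0 ϑ α c R0 t R : ℝ} {w φ : ℝ → Evec n}
    (h : IsAdmissible t0 ϑ α c R0 t w φ) (hc : 0 ≤ c) (hR : ∀ τ ∈ Icc t0 t, ‖w τ‖ ≤ R) :
    ∀ᵐ τ ∂volume.restrict (Icc t0 t), ‖φ τ‖ ≤ (1 + R) * c := by
  obtain ⟨-, -, -, -, -, -, hφ⟩ := h
  filter_upwards [hφ, ae_restrict_mem measurableSet_Icc] with τ hτ hmem
  exact hτ.trans (mul_le_mul_of_nonneg_right (by linarith [hR τ hmem]) hc)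

theorem IsAdmissible.norm_sub_le {n : ℕ} {t0 ϑ α c R0 t M : ℝ} {w φ : ℝ → Evec n}
    (h : IsAdmissible t0 ϑ α c R0 t w φ) (hα : α ∈ Ioo 0 1) (hM0 : 0 ≤ M)
    (hM : ∀ᵐ s ∂volume.restrict (Icc t0 t), ‖φ s‖ ≤ M) {τ τ' : ℝ} (hτ : τ ∈ Icc t0 t)
    (hτ' : τ' ∈ Icc t0 t) :
    ‖w τ - w τ'‖ ≤ 2 * M / Real.Gamma (α + 1) * |τ - τ'| ^ α := by
  wlog hle : τ' ≤ τ generalizing τ τ'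
  · rw [norm_sub_rev, abs_sub_comm]
    exact this hτ' hτ (le_of_not_ge hle)
  obtain ⟨-, -, -, hφ, -, hRL, -⟩ := h
  rw [hRL τ hτ, hRL τ' hτ', add_sub_add_left_eq_sub, abs_of_nonneg (sub_nonneg.2 hle)]
  exact norm_RL_sub_RL_le hα hM0 hφ.aestronglyMeasurable hM hτ'.1 hle hτ.2

theorem admissible_positions_properties_general
    (t0 ϑ : ℝ) (hT : t0 < ϑ) (n : ℕ) (α : ℝ) (hα : α ∈ Set.Ioo (0 : ℝ) 1)
    (c R0 : ℝ) (hc : 0 < c) (hR0 : 0 < R0) :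
    (∀ t ∈ Icc t0 ϑ, ∀ w0 : Evec n, ‖w0‖ ≤ R0 →
      IsAdmissible t0 ϑ α c R0 t (fun _ => w0) (fun _ => 0)) ∧
    ∃ R1 M1 H1 : ℝ, 0 < R1 ∧ 0 < M1 ∧ 0 < H1 ∧
      R1 = (1 + R0) * ML α ((ϑ - t0) ^ α * c) - 1 ∧ M1 = (1 + R1) * c ∧
      ∀ (t : ℝ) (w φ : ℝ → Evec n), IsAdmissible t0 ϑ α c R0 t w φ →
        (∀ τ ∈ Icc t0 t, ‖w τ‖ ≤ R1) ∧
        (∀ᵐ τ ∂(volume.restrict (Icc t0 t)), ‖φ τ‖ ≤ M1) ∧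
        (∀ τ ∈ Icc t0 t, ∀ τ' ∈ Icc t0 t, ‖w τ - w τ'‖ ≤ H1 * |τ - τ'| ^ α) := by
  have hML : 1 ≤ ML α ((ϑ - t0) ^ α * c) :=
    one_le_ML hα (mul_nonneg (Real.rpow_nonneg (sub_nonneg.2 hT.le) _) hc.le)
  set R1 := (1 + R0) * ML α ((ϑ - t0) ^ α * c) - 1
  set M1 := (1 + R1) * c
  have hR1 : 0 < R1 := by nlinarith
  have hM1 : 0 < M1 := by positivity
  have hΓ : 0 < Real.Gamma (α + 1) := Real.Gamma_pos_of_pos (by linarith [hα.1])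
  refine ⟨fun t ht w0 hw0 => isAdmissible_const ht hw0 hc.le, R1, M1, 2 * M1 / Real.Gamma (α + 1),
    hR1, hM1, by positivity, rfl, rfl, fun t w φ h => ?_⟩
  have hw : ∀ τ ∈ Icc t0 t, ‖w τ‖ ≤ R1 := fun τ hτ => by
    linarith [h.one_add_norm_le hα hc.le hτ]
  have hφ : ∀ᵐ τ ∂volume.restrict (Icc t0 t), ‖φ τ‖ ≤ M1 := h.ae_norm_le hc.le hw
  exact ⟨hw, hφ, fun τ hτ τ' hτ' => h.norm_sub_le hα hM1.le hφ hτ hτ'⟩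

/-- Proposition 1: the set of admissible positions is nonempty, and there are
constants `R1, M1, H1 > 0` (with `R1 = (1+R0) E_α((ϑ-t0)^α c) - 1` and `M1 = (1+R1)c`)
bounding every admissible position, its Caputo derivative, and its Hölder constant. -/
theorem admissible_positions_properties
    (t0 ϑ : ℝ) (hT : t0 < ϑ) (n : ℕ) (hn : 1 ≤ n) (α : ℝ) (hα : α ∈ Set.Ioo (0 : ℝ) 1)
    (c R0 : ℝ) (hc : 0 < c) (hR0 : 0 < R0) :
    (∀ t ∈ Icc t0 ϑ, ∀ w0 : Evec n, ‖w0‖ ≤ R0 →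
      IsAdmissible t0 ϑ α c R0 t (fun _ => w0) (fun _ => 0)) ∧
    ∃ R1 M1 H1 : ℝ, 0 < R1 ∧ 0 < M1 ∧ 0 < H1 ∧
      R1 = (1 + R0) * ML α ((ϑ - t0) ^ α * c) - 1 ∧ M1 = (1 + R1) * c ∧
      ∀ (t : ℝ) (w φ : ℝ → Evec n), IsAdmissible t0 ϑ α c R0 t w φ →
        (∀ τ ∈ Icc t0 t, ‖w τ‖ ≤ R1) ∧
        (∀ᵐ τ ∂(volume.restrict (Icc t0 t)), ‖φ τ‖ ≤ M1) ∧
        (∀ τ ∈ Icc t0 t, ∀ τ' ∈ Icc t0 t, ‖w τ - w τ'‖ ≤ H1 * |τ - τ'| ^ α) :=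
  admissible_positions_properties_general t0 ϑ hT n α hα c R0 hc hR0

end
end

section
/- Assume (A.1)–(A.3). Let (t*, w*(·)) be an admissible position, let t* ≤ t^ ≤ ϑ, let u, v be measurable control realizations on [t*,ϑ], and let x be the motion generated from (t*, w*(·)) by (u, v). Let u^, v^ be measurable control realizations on [t^,ϑ] and let x^ be the motion generated from the admissible position (t^, x|_{[t0,t^]}) by (u^, v^). Then x^ coincides with the motion generated from (t*, w*(·)) by the concatenated control realizations equal to (u, v) on [t*, t^) and to (u^, v^) on [t^, ϑ]. -/
open MeasureTheory Set
open scoped RealInnerProductSpace NNReal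

noncomputable section

/-!
Up to `that` the motion `x` solves `x = x(t0) + I^α ψ` with `ψ` equal to `φstar` before `tstar`
and to `f(τ, x, u, v)` after it, while admissibility of `(that, x)` gives `x = x(t0) + I^α φhat`.
Caputo derivatives are unique: applying `I^{1-α}` to `I^α g = 0` and using Fubini (the kernels
combine into the Beta integral `B(α, 1-α) > 0`) shows that every primitive of `g` vanishes, so
`g = 0` a.e. by Lebesgue differentiation. Hence `φhat = ψ` a.e., and the Volterra equation of
`xhat` turns into that of the motion from `(tstar, wstar)` driven by the concatenated controls.
-/

open scoped ENNReal

lemma memLp_top_ite_lt {E : Type*} [NormedAddCommGroup E] {a b c : ℝ} {g h : ℝ → E}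
    (hg : MemLp g ∞ (volume.restrict (Icc a b))) (hh : MemLp h ∞ (volume.restrict (Icc b c))) :
    MemLp (fun τ => if τ < b then g τ else h τ) ∞ (volume.restrict (Icc a c)) := by
  have hpw : (fun τ => if τ < b then g τ else h τ) = (Iio b).piecewise g h := by
    ext τ; simp [piecewise]
  rw [hpw]
  refine MemLp.piecewise measurableSet_Iio ?_ ?_
  · rw [Measure.restrict_restrict measurableSet_Iio]
    exact hg.mono_measure (Measure.restrict_mono (fun τ (hτ : τ ∈ Iio b ∩ Icc a c) =>
      (⟨hτ.2.1, hτ.1.le⟩ : τ ∈ Icc a b)) le_rfl)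
  · rw [Measure.restrict_restrict measurableSet_Iio.compl]
    exact hh.mono_measure (Measure.restrict_mono (fun τ (hτ : τ ∈ (Iio b)ᶜ ∩ Icc a c) =>
      (⟨not_lt.1 hτ.1, hτ.2.2⟩ : τ ∈ Icc b c)) le_rfl)

def realBeta (p q : ℝ) : ℝ := ∫ x in (0:ℝ)..1, x ^ (p - 1) * (1 - x) ^ (q - 1)

lemma intervalIntegrable_rpow_sub_mul_rpow_sub {p q u v : ℝ} (hp : 0 < p) (hq : 0 < q)
    (huv : u ≤ v) :
    IntervalIntegrable (fun σ => (σ - u) ^ (p - 1) * (v - σ) ^ (q - 1)) volume u v := by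
  rcases huv.eq_or_lt with rfl | huv
  · exact IntervalIntegrable.refl
  obtain ⟨m, hum, hmv⟩ := exists_between huv
  have hleft : IntervalIntegrable (fun σ => (σ - u) ^ (p - 1) * (v - σ) ^ (q - 1)) volume u m := by
    have h := (intervalIntegral.intervalIntegrable_rpow' (r := p - 1) (a := 0) (b := m - u)
      (by linarith)).comp_sub_right u
    simp only [zero_add, sub_add_cancel] at h
    refine h.mul_continuousOn (ContinuousOn.rpow_const (by fun_prop) fun σ hσ => Or.inl ?_)
    rw [uIcc_of_le hum.le] at hσ
    exact (sub_pos.2 (hσ.2.trans_lt hmv)).ne'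
  have hright : IntervalIntegrable (fun σ => (σ - u) ^ (p - 1) * (v - σ) ^ (q - 1)) volume m v := by
    have h := (intervalIntegral.intervalIntegrable_rpow' (r := q - 1) (a := v - m) (b := 0)
      (by linarith)).comp_sub_left v
    simp only [sub_sub_cancel, sub_zero] at h
    refine h.continuousOn_mul (ContinuousOn.rpow_const (by fun_prop) fun σ hσ => Or.inl ?_)
    rw [uIcc_of_le hmv.le] at hσ
    exact (sub_pos.2 (hum.trans_le hσ.1)).ne'
  exact hleft.trans hright

lemma realBeta_pos {p q : ℝ} (hp : 0 < p) (hq : 0 < q) : 0 < realBeta p q := by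
  have h := intervalIntegrable_rpow_sub_mul_rpow_sub hp hq zero_le_one
  simp only [sub_zero] at h
  exact intervalIntegral.intervalIntegral_pos_of_pos_on h
    (fun x hx => mul_pos (Real.rpow_pos_of_pos hx.1 _)
      (Real.rpow_pos_of_pos (sub_pos.2 hx.2) _))
    one_pos

lemma integral_rpow_sub_mul_rpow_sub {u v : ℝ} (huv : u < v) (p q : ℝ) :
    ∫ σ in u..v, (σ - u) ^ (p - 1) * (v - σ) ^ (q - 1) = (v - u) ^ (p + q - 1) * realBeta p q := by
  have hL : 0 < v - u := by linarith
  have key := intervalIntegral.integral_comp_mul_add (a := 0) (b := 1)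
    (fun σ => (σ - u) ^ (p - 1) * (v - σ) ^ (q - 1)) hL.ne' u
  rw [mul_zero, zero_add, mul_one, sub_add_cancel, smul_eq_mul,
    eq_inv_mul_iff_mul_eq₀ hL.ne'] at key
  rw [← key, realBeta, ← intervalIntegral.integral_const_mul,
    ← intervalIntegral.integral_const_mul]
  refine intervalIntegral.integral_congr fun x hx => ?_
  rw [uIcc_of_le zero_le_one] at hx
  have h1 : (v - u) * x + u - u = (v - u) * x := by ring
  have h2 : v - ((v - u) * x + u) = (v - u) * (1 - x) := by ring
  have h3 : (v - u) ^ (p + q - 1) = (v - u) * ((v - u) ^ (p - 1) * (v - u) ^ (q - 1)) := by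
    rw [show p + q - 1 = 1 + ((p - 1) + (q - 1)) by ring, Real.rpow_add hL, Real.rpow_add hL,
      Real.rpow_one]
  simp only [h1, h2, h3, Real.mul_rpow hL.le hx.1, Real.mul_rpow hL.le (sub_nonneg.2 hx.2)]
  ring

section RiemannLiouville

variable {E : Type*} [NormedAddCommGroup E] [NormedSpace ℝ E]

lemma intervalIntegral_ite_lt {a b c : ℝ} (hab : a ≤ b) (hbc : b ≤ c) {g h : ℝ → E}
    (hg : IntervalIntegrable g volume a b) (hh : IntervalIntegrable h volume b c) :
    ∫ τ in a..c, (if τ < b then g τ else h τ) = (∫ τ in a..b, g τ) + ∫ τ in b..c, h τ := by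
  have hleft : EqOn (fun τ => if τ < b then g τ else h τ) g (uIoo a b) := fun τ hτ => by
    rw [uIoo_of_le hab] at hτ; simp [hτ.2]
  have hright : EqOn (fun τ => if τ < b then g τ else h τ) h (uIoo b c) := fun τ hτ => by
    rw [uIoo_of_le hbc] at hτ; simp [not_lt.2 hτ.1.le]
  rw [← intervalIntegral.integral_add_adjacent_intervals (hg.congr_uIoo hleft.symm)
    (hh.congr_uIoo hright.symm), intervalIntegral.integral_congr_uIoo hleft,
    intervalIntegral.integral_congr_uIoo hright]

lemma intervalIntegrable_rpow_sub_smul {β : ℝ} (hβ : -1 < β) {a b : ℝ} (hab : a ≤ b) (t : ℝ)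
    {g : ℝ → E} (hg : MemLp g ∞ (volume.restrict (Icc a b))) :
    IntervalIntegrable (fun τ => (t - τ) ^ β • g τ) volume a b := by
  have hker :=
    (intervalIntegral.intervalIntegrable_rpow' (a := t - a) (b := t - b) hβ).comp_sub_left t
  simp only [sub_sub_cancel] at hker
  exact (intervalIntegrable_iff_integrableOn_Ioc_of_le hab).2 <|
    hker.1.smul_of_top_left (hg.mono_measure (Measure.restrict_mono Ioc_subset_Icc_self le_rfl))

lemma integrable_and_integral_ite_rpow_mul_rpow {α a b τ : ℝ} (hα0 : 0 < α) (hα1 : α < 1)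
    (hτ : τ ∈ Ioo a b) :
    Integrable (fun σ => if τ ≤ σ then (σ - τ) ^ (α - 1) * (b - σ) ^ (-α) else 0)
      (volume.restrict (Ioc a b)) ∧
    ∫ σ in Ioc a b, (if τ ≤ σ then (σ - τ) ^ (α - 1) * (b - σ) ^ (-α) else 0)
      = realBeta α (1 - α) := by
  have hind : (fun σ => if τ ≤ σ then (σ - τ) ^ (α - 1) * (b - σ) ^ (-α) else 0)
      = (Ici τ).indicator (fun σ => (σ - τ) ^ (α - 1) * (b - σ) ^ ((1 - α) - 1)) := by
    ext σ; simp [indicator_apply, show 1 - α - 1 = -α by ring]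
  have hset : (Ioc a b ∩ Ici τ : Set ℝ) =ᵐ[volume] (Ioc τ b : Set ℝ) := by
    rw [show Ioc a b ∩ Ici τ = Icc τ b from
      ext fun σ => ⟨fun h => ⟨h.2, h.1.2⟩, fun h => ⟨⟨hτ.1.trans_le h.1, h.2⟩, h.1⟩⟩]
    exact Ioc_ae_eq_Icc.symm
  have hint := (intervalIntegrable_rpow_sub_mul_rpow_sub hα0 (sub_pos.2 hα1) hτ.2.le).1
  rw [hind]
  refine ⟨(integrable_indicator_iff measurableSet_Ici).2 ?_, ?_⟩
  · rw [IntegrableOn, Measure.restrict_restrict measurableSet_Ici, inter_comm,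
      Measure.restrict_congr_set hset]
    exact hint
  · rw [setIntegral_indicator measurableSet_Ici, setIntegral_congr_set hset,
      ← intervalIntegral.integral_of_le hτ.2.le, integral_rpow_sub_mul_rpow_sub hτ.2,
      show α + (1 - α) - 1 = 0 by ring, Real.rpow_zero, one_mul]

-- The composition rule `I^{1-α} I^α = I^1` for Riemann–Liouville integrals, Gamma factors
-- cleared.
lemma integral_rpow_smul_integral_rpow_smul {α a b : ℝ} (hα0 : 0 < α) (hα1 : α < 1)
    [CompleteSpace E] {g : ℝ → E} (hg : IntegrableOn g (Ioc a b)) :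
    ∫ σ in Ioc a b, (b - σ) ^ (-α) • ∫ τ in Ioc a σ, (σ - τ) ^ (α - 1) • g τ
      = realBeta α (1 - α) • ∫ τ in Ioc a b, g τ := by
  set μ := volume.restrict (Ioc a b)
  set κ : ℝ → ℝ → ℝ := fun σ τ => if τ ≤ σ then (σ - τ) ^ (α - 1) * (b - σ) ^ (-α) else 0
  have hsection : ∀ᵐ τ ∂μ, Integrable (fun σ => κ σ τ) μ ∧ ∫ σ, κ σ τ ∂μ = realBeta α (1 - α) := by
    have hb : ∀ᵐ τ : ℝ ∂volume, τ ≠ b := by simp [ae_iff, measure_singleton]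
    filter_upwards [ae_restrict_of_ae hb, ae_restrict_mem measurableSet_Ioc] with τ hτb hτ
    exact integrable_and_integral_ite_rpow_mul_rpow hα0 hα1 ⟨hτ.1, hτ.2.lt_of_ne hτb⟩
  have hκm : Measurable (fun z : ℝ × ℝ => κ z.1 z.2) :=
    Measurable.ite (measurableSet_le measurable_snd measurable_fst) (by fun_prop) measurable_const
  have hF : Integrable (fun z : ℝ × ℝ => κ z.1 z.2 • g z.2) (μ.prod μ) := by
    refine (integrable_prod_iff' (hκm.aestronglyMeasurable.smul hg.1.comp_snd)).2 ⟨?_, ?_⟩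
    · filter_upwards [hsection] with τ hτ using hτ.1.smul_const (g τ)
    · refine (hg.norm.const_mul (realBeta α (1 - α))).congr ?_
      filter_upwards [hsection] with τ hτ
      rw [← hτ.2, ← integral_mul_const]
      refine integral_congr_ae ?_
      filter_upwards [ae_restrict_mem measurableSet_Ioc] with σ hσ
      have hκ0 : 0 ≤ κ σ τ := by
        simp only [κ]; split_ifs with h
        · exact mul_nonneg (Real.rpow_nonneg (sub_nonneg.2 h) _)
            (Real.rpow_nonneg (sub_nonneg.2 hσ.2) _)
        · exact le_rfl
      simp only [Pi.smul_apply', norm_smul, Real.norm_of_nonneg hκ0]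
  have hinner : ∀ σ ∈ Ioc a b, ∫ τ, κ σ τ • g τ ∂μ
      = (b - σ) ^ (-α) • ∫ τ in Ioc a σ, (σ - τ) ^ (α - 1) • g τ := by
    intro σ hσ
    have hind : (fun τ => κ σ τ • g τ)
        = fun τ => (b - σ) ^ (-α) • (Iic σ).indicator (fun τ => (σ - τ) ^ (α - 1) • g τ) τ := by
      ext τ; by_cases h : τ ≤ σ <;> simp [κ, h, mul_comm, mul_smul]
    rw [hind, integral_smul, setIntegral_indicator measurableSet_Iic, Ioc_inter_Iic,
      min_eq_right hσ.2]
  rw [← setIntegral_congr_fun measurableSet_Ioc hinner, integral_integral_swap hF,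
    ← integral_smul]
  refine integral_congr_ae ?_
  filter_upwards [hsection] with τ hτ
  rw [integral_smul_const, hτ.2]

lemma setIntegral_eq_zero_of_forall_integral_rpow_smul_eq_zero {α a b : ℝ} (hα0 : 0 < α)
    (hα1 : α < 1) [CompleteSpace E] {g : ℝ → E} (hg : IntegrableOn g (Ioc a b))
    (H : ∀ s ∈ Ioc a b, ∫ τ in a..s, (s - τ) ^ (α - 1) • g τ = 0) :
    ∫ τ in Ioc a b, g τ = 0 := by
  have h := integral_rpow_smul_integral_rpow_smul hα0 hα1 hg
  rw [setIntegral_congr_fun measurableSet_Ioc (g := fun _ => (0 : E)) fun σ hσ => by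
    rw [← intervalIntegral.integral_of_le hσ.1.le, H σ hσ, smul_zero]] at h
  simpa [(realBeta_pos hα0 (sub_pos.2 hα1)).ne'] using h.symm

lemma ae_eq_zero_of_forall_integral_rpow_smul_eq_zero {α a b : ℝ} (hα0 : 0 < α) (hα1 : α < 1)
    [CompleteSpace E] {g : ℝ → E} (hg : IntegrableOn g (Ioc a b))
    (H : ∀ s ∈ Ioc a b, ∫ τ in a..s, (s - τ) ^ (α - 1) • g τ = 0) :
    g =ᵐ[volume.restrict (Ioc a b)] 0 := by
  rcases lt_or_ge b a with hba | hab
  · simp [Ioc_eq_empty_of_le hba.le, Filter.EventuallyEq]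
  have hprim : ∀ s ∈ Icc a b, ∫ τ in a..s, g τ = 0 := fun s hs => by
    rw [intervalIntegral.integral_of_le hs.1]
    exact setIntegral_eq_zero_of_forall_integral_rpow_smul_eq_zero hα0 hα1
      (hg.mono_set (Ioc_subset_Ioc_right hs.2)) fun σ hσ => H σ ⟨hσ.1, hσ.2.trans hs.2⟩
  have hb : ∀ᵐ τ : ℝ ∂volume, τ ≠ b := by simp [ae_iff, measure_singleton]
  have hderiv := ((intervalIntegrable_iff_integrableOn_Ioc_of_le hab).2 hg).ae_hasDerivAt_integral
  rw [Filter.EventuallyEq, ae_restrict_iff' measurableSet_Ioc]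
  filter_upwards [hderiv, hb] with x hx hxb hxab
  have hxab' : x ∈ Ioo a b := ⟨hxab.1, hxab.2.lt_of_ne hxb⟩
  have hzero : HasDerivAt (fun y => ∫ τ in a..y, g τ) 0 x :=
    (hasDerivAt_const x (0 : E)).congr_of_eventuallyEq <|
      Filter.eventually_of_mem (Ioo_mem_nhds hxab'.1 hxab'.2) fun y hy =>
        hprim y ⟨hy.1.le, hy.2.le⟩
  have hx_mem : x ∈ uIcc a b := by rw [uIcc_of_le hab]; exact Ioo_subset_Icc_self hxab'
  exact (hx hx_mem a left_mem_uIcc).unique hzero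

end RiemannLiouville

section Motion

variable {t0 ϑ α : ℝ} {n r s : ℕ}

lemma RL_congr_ae {a b t : ℝ} {g h : ℝ → Evec n} (hgh : g =ᵐ[volume.restrict (Icc a b)] h)
    (ht : t ∈ Icc a b) : RL a α g t = RL a α h t := by
  have hgh' := (ae_restrict_iff' measurableSet_Icc).1 hgh
  rw [RL, RL, intervalIntegral.integral_congr_ae]
  filter_upwards [hgh'] with τ hτ hτmem
  rw [uIoc_of_le ht.1] at hτmem
  rw [hτ ⟨hτmem.1.le, hτmem.2.trans ht.2⟩]

lemma RL_ite_lt_of_le {a b t : ℝ} (hat : a ≤ t) (htb : t ≤ b) (g h : ℝ → Evec n) :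
    RL a α (fun τ => if τ < b then g τ else h τ) t = RL a α g t := by
  rw [RL, RL, intervalIntegral.integral_congr_uIoo fun τ hτ => ?_]
  rw [uIoo_of_le hat] at hτ
  simp [hτ.2.trans_le htb]

lemma RL_ite_lt_of_ge (hα : 0 < α) {a b t : ℝ} (hab : a ≤ b) (hbt : b ≤ t) {g h : ℝ → Evec n}
    (hg : MemLp g ∞ (volume.restrict (Icc a b))) (hh : MemLp h ∞ (volume.restrict (Icc b t))) :
    RL a α (fun τ => if τ < b then g τ else h τ) t
      = (1 / Real.Gamma α) • (∫ τ in a..b, (t - τ) ^ (α - 1) • g τ)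
        + (1 / Real.Gamma α) • ∫ τ in b..t, (t - τ) ^ (α - 1) • h τ := by
  have hβ : -1 < α - 1 := by linarith
  simp only [RL, smul_ite]
  rw [intervalIntegral_ite_lt hab hbt (intervalIntegrable_rpow_sub_smul hβ hab t hg)
    (intervalIntegrable_rpow_sub_smul hβ hbt t hh), smul_add]

lemma ae_eq_of_RL_eq (hα0 : 0 < α) (hα1 : α < 1) {a b : ℝ} {g h : ℝ → Evec n}
    (hg : MemLp g ∞ (volume.restrict (Icc a b))) (hh : MemLp h ∞ (volume.restrict (Icc a b)))
    (H : ∀ t ∈ Icc a b, RL a α g t = RL a α h t) : g =ᵐ[volume.restrict (Icc a b)] h := by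
  have hβ : -1 < α - 1 := by linarith
  have hΓ : 1 / Real.Gamma α ≠ 0 := one_div_ne_zero (Real.Gamma_pos_of_pos hα0).ne'
  have hint : IntegrableOn (g - h) (Ioc a b) :=
    ((hg.sub hh).integrable le_top).mono_measure (Measure.restrict_mono Ioc_subset_Icc_self le_rfl)
  rw [Measure.restrict_congr_set Ioc_ae_eq_Icc.symm]
  refine (ae_eq_zero_of_forall_integral_rpow_smul_eq_zero hα0 hα1 hint fun t ht => ?_).mono
    fun τ hτ => sub_eq_zero.1 hτ
  have hgi := intervalIntegrable_rpow_sub_smul hβ ht.1.le t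
    (hg.mono_measure (Measure.restrict_mono (Icc_subset_Icc_right ht.2) le_rfl))
  have hhi := intervalIntegrable_rpow_sub_smul hβ ht.1.le t
    (hh.mono_measure (Measure.restrict_mono (Icc_subset_Icc_right ht.2) le_rfl))
  simp only [Pi.sub_apply, smul_sub]
  rw [intervalIntegral.integral_sub hgi hhi, sub_eq_zero]
  exact smul_right_injective (Evec n) hΓ (H t (Ioc_subset_Icc_self ht))

lemma IsAdmissible.memLp {c R0 t : ℝ} {w φ : ℝ → Evec n} (h : IsAdmissible t0 ϑ α c R0 t w φ) :
    MemLp φ ∞ (volume.restrict (Icc t0 t)) :=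
  let ⟨_, _, _, hφm, ⟨K, hK⟩, _⟩ := h
  memLp_top_of_bound hφm.aestronglyMeasurable K hK

lemma IsControl.ite {m : ℕ} {U : Set (Evec m)} {a b c : ℝ} {u u' : ℝ → Evec m}
    (hu : IsControl a c U u) (hu' : IsControl b c U u') :
    IsControl a c U (fun t => if t < b then u t else u' t) := by
  refine ⟨Measurable.ite measurableSet_Iio hu.1 hu'.1, fun t ht => ?_⟩
  dsimp only
  split_ifs with h
  exacts [hu.2 t ht, hu'.2 t ⟨not_lt.1 h, ht.2⟩]

variable {U : Set (Evec r)} {V : Set (Evec s)} {f : ℝ → Evec n → Evec r → Evec s → Evec n}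

lemma CondA1.memLp_top_comp (hA1 : CondA1 t0 ϑ U V f) (hU : IsCompact U) (hV : IsCompact V)
    {a b : ℝ} (ha : t0 ≤ a) (hb : b ≤ ϑ) {y : ℝ → Evec n} {p : ℝ → Evec r} {q : ℝ → Evec s}
    (hy : ContinuousOn y (Icc a b)) (hp : IsControl a b U p) (hq : IsControl a b V q) :
    MemLp (fun τ => f τ (y τ) (p τ) (q τ)) ∞ (volume.restrict (Icc a b)) := by
  obtain ⟨M, hM⟩ := isCompact_Icc.exists_bound_of_continuousOn hy
  set K := Icc a b ×ˢ Metric.closedBall (0 : Evec n) M ×ˢ U ×ˢ V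
  have hK : IsCompact K := isCompact_Icc.prod ((isCompact_closedBall _ _).prod (hU.prod hV))
  have hfK : ContinuousOn (fun z : ℝ × Evec n × Evec r × Evec s => f z.1 z.2.1 z.2.2.1 z.2.2.2) K :=
    hA1.mono (prod_mono (Icc_subset_Icc ha hb) (prod_mono (subset_univ _) subset_rfl))
  set w : ℝ → ℝ × Evec n × Evec r × Evec s := fun τ => (τ, y τ, p τ, q τ)
  have hwK : ∀ τ ∈ Icc a b, w τ ∈ K := fun τ hτ =>
    ⟨hτ, mem_closedBall_zero_iff.2 (hM τ hτ), hp.2 τ hτ, hq.2 τ hτ⟩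
  have hw : AEMeasurable w (volume.restrict (Icc a b)) := aemeasurable_id.prodMk
    ((hy.aemeasurable measurableSet_Icc).prodMk (hp.1.aemeasurable.prodMk hq.1.aemeasurable))
  obtain ⟨C, hC⟩ := hK.exists_bound_of_continuousOn hfK
  refine memLp_top_of_bound ?_ C ?_
  · have hKfull : ((volume.restrict (Icc a b)).map w).restrict K
        = (volume.restrict (Icc a b)).map w := by
      refine Measure.restrict_eq_self_of_ae_mem ((ae_map_iff hw hK.measurableSet).2 ?_)
      filter_upwards [ae_restrict_mem measurableSet_Icc] with τ hτ using hwK τ hτ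
    have := hfK.aestronglyMeasurable_of_isCompact hK hK.measurableSet
      (μ := (volume.restrict (Icc a b)).map w)
    rw [hKfull] at this
    exact this.comp_aemeasurable hw
  · filter_upwards [ae_restrict_mem measurableSet_Icc] with τ hτ using hC (w τ) (hwK τ hτ)

variable {tstar : ℝ} {wstar φstar x : ℝ → Evec n} {u : ℝ → Evec r} {v : ℝ → Evec s}

lemma isMotion_iff (hα : 0 < α) (ht0 : t0 ≤ tstar)
    (hφ : MemLp φstar ∞ (volume.restrict (Icc t0 tstar)))
    (hF : MemLp (fun τ => f τ (x τ) (u τ) (v τ)) ∞ (volume.restrict (Icc tstar ϑ))) :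
    IsMotion t0 ϑ α f tstar wstar φstar u v x ↔ ContinuousOn x (Icc t0 ϑ) ∧
      (∀ t ∈ Icc t0 tstar, x t = wstar t) ∧ ∀ t ∈ Icc tstar ϑ, x t = wstar t0 +
        RL t0 α (fun τ => if τ < tstar then φstar τ else f τ (x τ) (u τ) (v τ)) t := by
  refine and_congr_right' (and_congr_right' (forall₂_congr fun t ht => ?_))
  rw [RL_ite_lt_of_ge hα ht0 ht.1 hφ
    (hF.mono_measure (Measure.restrict_mono (Icc_subset_Icc_right ht.2) le_rfl)), add_assoc]

lemma IsMotion.eq_add_RL (hα : 0 < α) {c R0 : ℝ}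
    (hadm : IsAdmissible t0 ϑ α c R0 tstar wstar φstar)
    (hx : IsMotion t0 ϑ α f tstar wstar φstar u v x)
    (hF : MemLp (fun τ => f τ (x τ) (u τ) (v τ)) ∞ (volume.restrict (Icc tstar ϑ))) :
    ∀ t ∈ Icc t0 ϑ, x t = wstar t0 +
      RL t0 α (fun τ => if τ < tstar then φstar τ else f τ (x τ) (u τ) (v τ)) t := by
  intro t ht
  rcases le_total t tstar with hts | hst
  · rw [RL_ite_lt_of_le ht.1 hts, hx.2.1 t ⟨ht.1, hts⟩]
    exact hadm.2.2.2.2.2.1 t ⟨ht.1, hts⟩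
  · exact ((isMotion_iff hα hadm.1.1 hadm.memLp hF).1 hx).2.2 t ⟨hst, ht.2⟩

lemma IsMotion.ae_eq_ite_of_isAdmissible (hα0 : 0 < α) (hα1 : α < 1) {c R0 c' R0' : ℝ}
    (hadm : IsAdmissible t0 ϑ α c R0 tstar wstar φstar)
    (hx : IsMotion t0 ϑ α f tstar wstar φstar u v x)
    (hF : MemLp (fun τ => f τ (x τ) (u τ) (v τ)) ∞ (volume.restrict (Icc tstar ϑ)))
    {that : ℝ} {φhat : ℝ → Evec n} (hthat : that ∈ Icc tstar ϑ)
    (hadm' : IsAdmissible t0 ϑ α c' R0' that x φhat) :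
    φhat =ᵐ[volume.restrict (Icc t0 that)]
      fun τ => if τ < tstar then φstar τ else f τ (x τ) (u τ) (v τ) := by
  refine ae_eq_of_RL_eq hα0 hα1 hadm'.memLp (memLp_top_ite_lt hadm.memLp
    (hF.mono_measure (Measure.restrict_mono (Icc_subset_Icc_right hthat.2) le_rfl)))
    fun t ht => ?_
  have h := (hadm'.2.2.2.2.2.1 t ht).symm.trans
    (hx.eq_add_RL hα0 hadm hF t ⟨ht.1, ht.2.trans hthat.2⟩)
  rwa [hx.2.1 t0 ⟨le_rfl, hadm.1.1⟩, add_right_inj] at h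

end Motion

theorem motion_concatenation_general
    (t0 ϑ : ℝ) (n : ℕ) (α : ℝ) (hα : α ∈ Set.Ioo (0 : ℝ) 1) (r s : ℕ)
    (U : Set (Evec r)) (V : Set (Evec s)) (hUc : IsCompact U) (hVc : IsCompact V)
    (f : ℝ → Evec n → Evec r → Evec s → Evec n) (hA1 : CondA1 t0 ϑ U V f) (c : ℝ) (R0 : ℝ)
    (tstar : ℝ) (wstar φstar : ℝ → Evec n)
    (hadm : IsAdmissible t0 ϑ α c R0 tstar wstar φstar)
    (that : ℝ) (hthat : that ∈ Icc tstar ϑ)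
    (u : ℝ → Evec r) (v : ℝ → Evec s)
    (hu : IsControl tstar ϑ U u) (hv : IsControl tstar ϑ V v)
    (x : ℝ → Evec n) (hx : IsMotion t0 ϑ α f tstar wstar φstar u v x)
    (φhat : ℝ → Evec n) (hadm2 : IsAdmissible t0 ϑ α c R0 that x φhat)
    (uhat : ℝ → Evec r) (vhat : ℝ → Evec s)
    (huh : IsControl that ϑ U uhat) (hvh : IsControl that ϑ V vhat)
    (xhat : ℝ → Evec n) (hxh : IsMotion t0 ϑ α f that x φhat uhat vhat xhat) :
    IsMotion t0 ϑ α f tstar wstar φstar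
      (fun t => if t < that then u t else uhat t)
      (fun t => if t < that then v t else vhat t) xhat := by
  obtain ⟨hα0, hα1⟩ := hα
  have ht0 : t0 ≤ tstar := hadm.1.1
  have hF := hA1.memLp_top_comp hUc hVc ht0 le_rfl (hx.1.mono (Icc_subset_Icc_left ht0)) hu hv
  have hFhat := hA1.memLp_top_comp hUc hVc (ht0.trans hthat.1) le_rfl
    (hxh.1.mono (Icc_subset_Icc_left (ht0.trans hthat.1))) huh hvh
  have hFcat := hA1.memLp_top_comp hUc hVc ht0 le_rfl (hxh.1.mono (Icc_subset_Icc_left ht0))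
    (hu.ite huh) (hv.ite hvh)
  have hφhat := (ae_restrict_iff' measurableSet_Icc).1
    (hx.ae_eq_ite_of_isAdmissible hα0 hα1 hadm hF hthat hadm2)
  have hderiv : (fun τ => if τ < that then φhat τ else f τ (xhat τ) (uhat τ) (vhat τ))
      =ᵐ[volume.restrict (Icc t0 ϑ)] fun τ => if τ < tstar then φstar τ else
        f τ (xhat τ) (if τ < that then u τ else uhat τ) (if τ < that then v τ else vhat τ) := by
    rw [Filter.EventuallyEq, ae_restrict_iff' measurableSet_Icc]
    filter_upwards [hφhat] with τ hτ hτmem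
    by_cases h : τ < that
    · simp only [h, if_true, hτ ⟨hτmem.1, h.le⟩, hxh.2.1 τ ⟨hτmem.1, h.le⟩]
    · have h' : ¬τ < tstar := fun h' => h (h'.trans_le hthat.1)
      simp only [h, h', if_false]
  refine (isMotion_iff hα0 ht0 hadm.memLp hFcat).2 ⟨hxh.1, fun t ht => ?_, fun t ht => ?_⟩
  · rw [hxh.2.1 t ⟨ht.1, ht.2.trans hthat.1⟩, hx.2.1 t ht]
  · rw [hxh.eq_add_RL hα0 hadm2 hFhat t ⟨ht0.trans ht.1, ht.2⟩,
      RL_congr_ae hderiv ⟨ht0.trans ht.1, ht.2⟩, hx.2.1 t0 ⟨le_rfl, ht0⟩]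

/-- the semigroup (concatenation) property of motions: the motion generated from
an intermediate position of a motion coincides with the motion generated from the original
position by the concatenated control realizations. -/
theorem motion_concatenation
    (t0 ϑ : ℝ) (hT : t0 < ϑ) (n : ℕ) (hn : 1 ≤ n) (α : ℝ) (hα : α ∈ Set.Ioo (0 : ℝ) 1)
    (r s : ℕ) (hr : 1 ≤ r) (hs : 1 ≤ s)
    (U : Set (Evec r)) (V : Set (Evec s)) (hUc : IsCompact U) (hUne : U.Nonempty)
    (hVc : IsCompact V) (hVne : V.Nonempty)
    (f : ℝ → Evec n → Evec r → Evec s → Evec n)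
    (hA1 : CondA1 t0 ϑ U V f) (hA2 : CondA2 t0 ϑ U V f)
    (c : ℝ) (hc : 0 < c) (hA3 : CondA3 t0 ϑ U V f c)
    (R0 : ℝ) (hR0 : 0 < R0)
    (tstar : ℝ) (wstar φstar : ℝ → Evec n)
    (hadm : IsAdmissible t0 ϑ α c R0 tstar wstar φstar)
    (that : ℝ) (hthat : that ∈ Icc tstar ϑ)
    (u : ℝ → Evec r) (v : ℝ → Evec s)
    (hu : IsControl tstar ϑ U u) (hv : IsControl tstar ϑ V v)
    (x : ℝ → Evec n) (hx : IsMotion t0 ϑ α f tstar wstar φstar u v x)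
    (φhat : ℝ → Evec n) (hadm2 : IsAdmissible t0 ϑ α c R0 that x φhat)
    (uhat : ℝ → Evec r) (vhat : ℝ → Evec s)
    (huh : IsControl that ϑ U uhat) (hvh : IsControl that ϑ V vhat)
    (xhat : ℝ → Evec n) (hxh : IsMotion t0 ϑ α f that x φhat uhat vhat xhat) :
    IsMotion t0 ϑ α f tstar wstar φstar
      (fun t => if t < that then u t else uhat t)
      (fun t => if t < that then v t else vhat t) xhat :=
  motion_concatenation_general t0 ϑ n α hα r s U V hUc hVc f hA1 c R0 tstar wstar φstar hadm that
    hthat u v hu hv x hx φhat hadm2 uhat vhat huh hvh xhat hxh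

end
end
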